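/- If C is a proper cycle in a graph G, then I((G,C) ∘ 2K₁; x) = (1+x)^{|C|} · I((G,C) △ K₁; x). -/

import Mathlib

open Polynomial

open scoped Classical in
/-- The independence polynomial of a finite simple graph. -/
noncomputable def indepPoly {V : Type*} [Fintype V] (G : SimpleGraph V) : Polynomial ℤ :=
  ∑ s : Finset V, if (s : Set V).Pairwise (fun u v => ¬ G.Adj u v) then X ^ s.card else 0

/-- `(G,C) ∘ 2H`: each vertex of the cycle `c : ZMod q → V` gets two private copies of `H`. -/
def cycleCorona2 {V W : Type*} (G : SimpleGraph V) (q : ℕ) (c : ZMod q → V)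
    (H : SimpleGraph W) : SimpleGraph (V ⊕ ZMod q × Bool × W) where
  Adj x y :=
    match x, y with
    | .inl u, .inl v => G.Adj u v
    | .inl u, .inr (i, _, _) => u = c i
    | .inr (i, _, _), .inl u => u = c i
    | .inr (i, b, w), .inr (i', b', w') => i = i' ∧ b = b' ∧ H.Adj w w'
  symm := by
    constructor
    rintro (u | ⟨i, b, w⟩) (v | ⟨i', b', w'⟩) h
    · exact G.symm.symm _ _ h
    · exact h
    · exact h
    · exact ⟨h.1.symm, h.2.1.symm, h.2.2.symm⟩
  loopless := by
    constructor
    rintro (u | ⟨i, b, w⟩) h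
    · exact G.loopless.irrefl u h
    · exact H.loopless.irrefl w h.2.2

/-- `(G,C) △ H`: one copy of `H` for each edge of the cycle, joined to its two endpoints. -/
def cycleTriangle {V W : Type*} (G : SimpleGraph V) (q : ℕ) (c : ZMod q → V)
    (H : SimpleGraph W) : SimpleGraph (V ⊕ ZMod q × W) where
  Adj x y :=
    match x, y with
    | .inl u, .inl v => G.Adj u v
    | .inl u, .inr (i, _) => u = c i ∨ u = c (i + 1)
    | .inr (i, _), .inl u => u = c i ∨ u = c (i + 1)
    | .inr (i, w), .inr (i', w') => i = i' ∧ H.Adj w w'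
  symm := by
    constructor
    rintro (u | ⟨i, w⟩) (v | ⟨i', w'⟩) h
    · exact G.symm.symm _ _ h
    · exact h
    · exact h
    · exact ⟨h.1.symm, h.2.symm⟩
  loopless := by
    constructor
    rintro (u | ⟨i, w⟩) h
    · exact G.loopless.irrefl u h
    · exact H.loopless.irrefl w h.2

/-!
Split an independent set of either graph into its trace `S` on `G` and its new vertices. The new
vertices are pairwise nonadjacent, so `S` extends by an arbitrary set of new vertices without a
neighbour in `S`, and the `S`-term of `I` is `x ^ |S| * (1 + x) ^ m`. If `S` meets the cycle in
`k` vertices, then `m = 2 (q - k)` for the corona. For the triangle graph, `S` contains no two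
consecutive cycle vertices, so exactly `2 k` of the `q` cycle edges meet `S` and `m = q - 2 k`;
hence `2 (q - k) = q + (q - 2 k)`.
-/

open Finset

theorem Finset.sum_powerset_pow_card {R ι : Type*} [CommSemiring R] (a : R) (s : Finset ι) :
    ∑ t ∈ s.powerset, a ^ #t = (1 + a) ^ #s := by
  simpa [add_comm] using sum_pow_mul_eq_add_pow a 1 s

theorem Finset.card_filter_fst {ι β : Type*} [Fintype ι] [Fintype β] (P : ι → Prop)
    [DecidablePred P] : #{p : ι × β | P p.1} = #{i | P i} * Fintype.card β := by
  rw [← univ_product_univ, filter_product_left, card_product, card_univ]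

theorem Finset.card_filter_comp_of_bijective {ι : Type*} [Fintype ι] {σ : ι → ι}
    (hσ : σ.Bijective) (P : ι → Prop) [DecidablePred P] : #{i | P (σ i)} = #{i | P i} := by
  simp only [← Fintype.card_subtype]
  exact Fintype.card_congr ((Equiv.ofBijective σ hσ).subtypeEquiv fun _ => Iff.rfl)

theorem card_filter_not_and_not_add_two_mul {ι : Type*} [Fintype ι] {σ : ι → ι}
    (hσ : σ.Bijective) (P : ι → Prop) [DecidablePred P] (hP : ∀ i, ¬ (P i ∧ P (σ i))) :
    #{i | ¬ P i ∧ ¬ P (σ i)} + 2 * #{i | P i} = Fintype.card ι := by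
  classical
  have hdisj : Disjoint ({i | P i} : Finset ι) ({i | P (σ i)} : Finset ι) :=
    disjoint_filter.2 fun i _ hi hσi => hP i ⟨hi, hσi⟩
  have hor : #{i | P i ∨ P (σ i)} = 2 * #{i | P i} := by
    rw [filter_or, card_union_of_disjoint hdisj, card_filter_comp_of_bijective hσ, two_mul]
  rw [← hor, ← card_univ,
    ← card_filter_add_card_filter_not (s := univ) (fun i => P i ∨ P (σ i))]
  simp only [not_or, add_comm]

namespace SimpleGraph

variable {V W : Type*}

theorem isIndepSet_disjSum_iff (G : SimpleGraph (V ⊕ W)) (s : Finset V) (t : Finset W) :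
    G.IsIndepSet (s.disjSum t : Set (V ⊕ W)) ↔
      (G.comap Sum.inl).IsIndepSet s ∧ (G.comap Sum.inr).IsIndepSet t ∧
        ∀ v ∈ s, ∀ w ∈ t, ¬ G.Adj (.inl v) (.inr w) := by
  constructor
  · intro h
    refine ⟨fun u hu v hv huv => h (by simpa) (by simpa) (by simpa),
      fun a ha b hb hab => h (by simpa) (by simpa) (by simpa),
      fun v hv w hw => h (by simpa) (by simpa) (by simp)⟩
  · rintro ⟨hs, ht, hst⟩ (u | a) hx (v | b) hy hne
    · exact hs (by simpa using hx) (by simpa using hy) (by simpa using hne)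
    · exact hst u (by simpa using hx) b (by simpa using hy)
    · exact fun hadj => hst v (by simpa using hy) a (by simpa using hx) hadj.symm
    · exact ht (by simpa using hx) (by simpa using hy) (by simpa using hne)

open scoped Classical in
theorem indepPoly_eq_sum_isIndepSet [Fintype V] (G : SimpleGraph V) :
    indepPoly G = ∑ s : Finset V, if G.IsIndepSet s then X ^ #s else 0 := rfl

open scoped Classical in
theorem indepPoly_eq_sum_of_inr_indep [Fintype V] [Fintype W] (G : SimpleGraph (V ⊕ W))
    (G₀ : SimpleGraph V) (hV : G.comap Sum.inl = G₀)
    (hW : ∀ a b, ¬ G.Adj (.inr a) (.inr b)) :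
    indepPoly G = ∑ s : Finset V, if G₀.IsIndepSet s then
      X ^ #s * (1 + X) ^ #{w | ∀ v ∈ s, ¬ G.Adj (.inl v) (.inr w)} else 0 := by
  subst hV
  rw [indepPoly_eq_sum_isIndepSet, ← Finset.sumEquiv.toEquiv.symm.sum_comp, Fintype.sum_prod_type]
  refine sum_congr rfl fun s _ => ?_
  have hinr (t : Finset W) : (G.comap Sum.inr).IsIndepSet t := fun a _ b _ _ => hW a b
  set A : Finset W := {w | ∀ v ∈ s, ¬ G.Adj (.inl v) (.inr w)}
  split_ifs with hs
  · have hterm (t : Finset W) :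
        G.IsIndepSet (s.disjSum t : Set (V ⊕ W)) ↔ t ∈ A.powerset := by
      simp only [isIndepSet_disjSum_iff, hs, hinr, true_and, mem_powerset, subset_iff, A,
        mem_filter, mem_univ]
      exact ⟨fun h w hw v hv => h v hv w hw, fun h v hv w hw => h hw v hv⟩
    simp only [OrderIso.coe_symm_toEquiv, sumEquiv_symm_apply, hterm, card_disjSum, pow_add]
    rw [sum_ite_mem, univ_inter, ← mul_sum, sum_powerset_pow_card]
  · refine sum_eq_zero fun t _ => if_neg fun h => hs ((isIndepSet_disjSum_iff G s t).1 h).1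

end SimpleGraph

section CycleOperations

variable {V W : Type*} (G : SimpleGraph V) (q : ℕ) (c : ZMod q → V) (H : SimpleGraph W)
  [NeZero q] [Fintype W]

open scoped Classical in
theorem card_cycleCorona2_nonadj_inl (s : Finset V)
    [DecidablePred fun x => ∀ v ∈ s, ¬ (cycleCorona2 G q c H).Adj (.inl v) (.inr x)] :
    #{x | ∀ v ∈ s, ¬ (cycleCorona2 G q c H).Adj (.inl v) (.inr x)} =
      #{i | c i ∉ s} * (2 * Fintype.card W) := by
  rw [← Fintype.card_bool, ← Fintype.card_prod, ← card_filter_fst]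
  congr 1
  refine filter_congr fun ⟨i, b, w⟩ _ => ?_
  simp [cycleCorona2]

open scoped Classical in
theorem card_cycleTriangle_nonadj_inl (s : Finset V)
    [DecidablePred fun x => ∀ v ∈ s, ¬ (cycleTriangle G q c H).Adj (.inl v) (.inr x)] :
    #{x | ∀ v ∈ s, ¬ (cycleTriangle G q c H).Adj (.inl v) (.inr x)} =
      #{i | c i ∉ s ∧ c (i + 1) ∉ s} * Fintype.card W := by
  rw [← card_filter_fst]
  congr 1
  refine filter_congr fun ⟨i, w⟩ _ => ?_
  simp [cycleTriangle, forall_and]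

open scoped Classical in
theorem card_cycle_notMem_mul_two {s : Finset V} (hs : G.IsIndepSet s)
    (hadj : ∀ i, G.Adj (c i) (c (i + 1))) :
    #{i | c i ∉ s} * 2 = q + #{i | c i ∉ s ∧ c (i + 1) ∉ s} := by
  have hcycle := card_filter_not_and_not_add_two_mul
    (add_left_injective (1 : ZMod q)).bijective_of_finite (fun i => c i ∈ s)
    fun i h => hs h.1 h.2 (hadj i).ne (hadj i)
  rw [ZMod.card] at hcycle
  have hsplit : #{i | c i ∈ s} + #{i | c i ∉ s} = q := by
    simpa using card_filter_add_card_filter_not (s := (univ : Finset (ZMod q))) (fun i => c i ∈ s)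
  omega

end CycleOperations

theorem cycleCorona_two_indepPoly_general {V : Type*} [Fintype V]
    (G : SimpleGraph V) (q : ℕ) [NeZero q]
    (c : ZMod q → V)
    (hadj : ∀ i, G.Adj (c i) (c (i + 1))) :
    indepPoly (cycleCorona2 G q c (⊥ : SimpleGraph (Fin 1))) =
      (1 + X) ^ q * indepPoly (cycleTriangle G q c (⊥ : SimpleGraph (Fin 1))) := by
  rw [SimpleGraph.indepPoly_eq_sum_of_inr_indep (cycleCorona2 G q c ⊥) G rfl fun _ _ h => h.2.2,
    SimpleGraph.indepPoly_eq_sum_of_inr_indep (cycleTriangle G q c ⊥) G rfl fun _ _ h => h.2,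
    mul_sum]
  refine sum_congr rfl fun s _ => ?_
  simp only [card_cycleCorona2_nonadj_inl, card_cycleTriangle_nonadj_inl, Fintype.card_fin,
    mul_one]
  split_ifs with hs
  · rw [card_cycle_notMem_mul_two G q c hs hadj, pow_add]
    ring
  · rw [mul_zero]

theorem cycleCorona_two_indepPoly {V : Type*} [Fintype V]
    (G : SimpleGraph V) (q : ℕ) [NeZero q] (hq : 3 ≤ q)
    (c : ZMod q → V) (hinj : Function.Injective c)
    (hadj : ∀ i, G.Adj (c i) (c (i + 1))) :
    indepPoly (cycleCorona2 G q c (⊥ : SimpleGraph (Fin 1))) =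
      (1 + X) ^ q * indepPoly (cycleTriangle G q c (⊥ : SimpleGraph (Fin 1))) :=
  cycleCorona_two_indepPoly_general G q c hadj
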